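/- arXiv:0810.1621 — 5 statements merged into one kernel-verified Lean document; each statement's English description precedes it below -/
import Mathlib

section
/- Let χ be a bicharacter on ℤ^I of Cartan type with generalized Cartan matrix C, i.e. χ(α_i,α_i)^{c_{ij}} = χ(α_i,α_j)χ(α_j,α_i) for all i,j ∈ I, and [m+1]_{χ(α_i,α_i)} ≠ 0 for all i ∈ I and m < max{-c_{ij} : j ≠ i}. Then for each p ∈ I, the reflected bicharacter r_p(χ) = (s_p)*χ satisfies r_p(χ)(α_i,α_i) = χ(α_i,α_i) and r_p(χ)(α_i,α_j) r_p(χ)(α_j,α_i) = χ(α_i,α_j)χ(α_j,α_i) for all i,j ∈ I; in particular r_p(χ) is again of Cartan type with the same Cartan matrix C. -/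
/-!
Expanding bimultiplicatively, `χ(a - x e, b - y e) χ(b - y e, a - x e)` differs from
`χ(a, b) χ(b, a)` by `(χ(a, e) χ(e, a))^(-y) (χ(b, e) χ(e, b))^(-x) χ(e, e)^(2xy)`.
For `e = α_p` the Cartan condition in row `p` says `χ(α_i, e) χ(e, α_i) = χ(e, e)^(c_pi)`,
and `s_p α_i = α_i - c_pi α_p`, so this factor is `1`. The Cartan conditions for `r_p(χ)`
then only involve the unchanged quantities `χ(α_i, α_i)` and `χ(α_i, α_j) χ(α_j, α_i)`.
-/

structure IsBicharacter {M G : Type*} [Add M] [Mul G] (χ : M → M → G) : Prop where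
  map_add_left : ∀ a b c, χ (a + b) c = χ a c * χ b c
  map_add_right : ∀ a b c, χ a (b + c) = χ a b * χ a c

namespace IsBicharacter

variable {M G : Type*} [AddCommGroup M] [CommGroup G] {χ : M → M → G}

def leftHom (hχ : IsBicharacter χ) (b : M) : M →+ Additive G :=
  AddMonoidHom.mk' (fun a => Additive.ofMul (χ a b)) fun a a' => hχ.map_add_left a a' b

def rightHom (hχ : IsBicharacter χ) (a : M) : M →+ Additive G :=
  AddMonoidHom.mk' (fun b => Additive.ofMul (χ a b)) fun b b' => hχ.map_add_right a b b'

theorem map_sub_left (hχ : IsBicharacter χ) (a a' b : M) : χ (a - a') b = χ a b / χ a' b :=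
  (hχ.leftHom b).map_sub a a'

theorem map_sub_right (hχ : IsBicharacter χ) (a b b' : M) : χ a (b - b') = χ a b / χ a b' :=
  (hχ.rightHom a).map_sub b b'

theorem map_zsmul_left (hχ : IsBicharacter χ) (n : ℤ) (a b : M) : χ (n • a) b = χ a b ^ n :=
  (hχ.leftHom b).map_zsmul n a

theorem map_zsmul_right (hχ : IsBicharacter χ) (n : ℤ) (a b : M) : χ a (n • b) = χ a b ^ n :=
  (hχ.rightHom a).map_zsmul n b

theorem map_sub_zsmul_sub_zsmul (hχ : IsBicharacter χ) (a b e : M) (x y : ℤ) :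
    χ (a - x • e) (b - y • e) = χ a b / χ a e ^ y / χ e b ^ x * χ e e ^ (x * y) := by
  rw [hχ.map_sub_left, hχ.map_sub_right, hχ.map_sub_right, hχ.map_zsmul_left, hχ.map_zsmul_left,
    hχ.map_zsmul_right, hχ.map_zsmul_right, ← zpow_mul, mul_comm y x, div_div_eq_mul_div]
  simp only [div_eq_mul_inv]
  ac_rfl

theorem map_sub_zsmul_self (hχ : IsBicharacter χ) {a e : M} {x : ℤ}
    (ha : χ a e * χ e a = χ e e ^ x) : χ (a - x • e) (a - x • e) = χ a a := by
  rw [hχ.map_sub_zsmul_sub_zsmul, div_div, ← mul_zpow, ha, ← zpow_mul, div_mul_cancel]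

theorem mul_swap_sub_zsmul (hχ : IsBicharacter χ) {a b e : M} {x y : ℤ}
    (ha : χ a e * χ e a = χ e e ^ x) (hb : χ b e * χ e b = χ e e ^ y) :
    χ (a - x • e) (b - y • e) * χ (b - y • e) (a - x • e) = χ a b * χ b a := by
  rw [hχ.map_sub_zsmul_sub_zsmul, hχ.map_sub_zsmul_sub_zsmul]
  calc _ = χ a b * χ b a / (χ a e * χ e a) ^ y / (χ b e * χ e b) ^ x *
        χ e e ^ (x * y + y * x) := by
          rw [mul_zpow, mul_zpow, zpow_add]
          simp only [div_eq_mul_inv, mul_inv]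
          ac_rfl
    _ = χ a b * χ b a := by
          rw [ha, hb, ← zpow_mul, ← zpow_mul, div_div, ← zpow_add, mul_comm y x, div_mul_cancel]

end IsBicharacter

theorem stmt_6_general {k : Type*} [Field k] {I : Type*} [Fintype I] [DecidableEq I]
    (C : I → I → ℤ)
    (χ : (I → ℤ) → (I → ℤ) → kˣ)
    (h1 : ∀ a b c : I → ℤ, χ (a + b) c = χ a c * χ b c)
    (h2 : ∀ c a b : I → ℤ, χ c (a + b) = χ c a * χ c b)
    (hCartan : ∀ i j : I,
      χ (Pi.single i 1) (Pi.single i 1) ^ (C i j)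
        = χ (Pi.single i 1) (Pi.single j 1) * χ (Pi.single j 1) (Pi.single i 1))
    (hqnum : ∀ i : I, ∀ m : ℕ, (∃ j, j ≠ i ∧ (m : ℤ) < -C i j) →
      (∑ l ∈ Finset.range (m + 1),
        ((χ (Pi.single i 1) (Pi.single i 1) : kˣ) : k) ^ l) ≠ 0)
    (p : I)
    (s : (I → ℤ) → (I → ℤ))
    (hs : ∀ x, s x = x - (∑ j, C p j * x j) • Pi.single p 1) :
    (∀ i : I, χ (s (Pi.single i 1)) (s (Pi.single i 1))
        = χ (Pi.single i 1) (Pi.single i 1)) ∧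
    (∀ i j : I,
      χ (s (Pi.single i 1)) (s (Pi.single j 1)) * χ (s (Pi.single j 1)) (s (Pi.single i 1))
        = χ (Pi.single i 1) (Pi.single j 1) * χ (Pi.single j 1) (Pi.single i 1)) ∧
    (∀ i j : I,
      χ (s (Pi.single i 1)) (s (Pi.single i 1)) ^ (C i j)
        = χ (s (Pi.single i 1)) (s (Pi.single j 1)) *
            χ (s (Pi.single j 1)) (s (Pi.single i 1))) ∧
    (∀ i : I, ∀ m : ℕ, (∃ j, j ≠ i ∧ (m : ℤ) < -C i j) →
      (∑ l ∈ Finset.range (m + 1),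
        ((χ (s (Pi.single i 1)) (s (Pi.single i 1)) : kˣ) : k) ^ l) ≠ 0) := by
  have hχ : IsBicharacter χ := ⟨h1, h2⟩
  have hs_single (i : I) : s (Pi.single i 1) = Pi.single i 1 - C p i • Pi.single p 1 := by
    simp [hs, Pi.single_apply]
  have hCartan_p (i : I) : χ (Pi.single i 1) (Pi.single p 1) * χ (Pi.single p 1) (Pi.single i 1)
      = χ (Pi.single p 1) (Pi.single p 1) ^ C p i := by
    rw [mul_comm, hCartan]
  have hdiag (i : I) : χ (s (Pi.single i 1)) (s (Pi.single i 1))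
      = χ (Pi.single i 1) (Pi.single i 1) := by
    rw [hs_single]
    exact hχ.map_sub_zsmul_self (hCartan_p i)
  have hsymm (i j : I) :
      χ (s (Pi.single i 1)) (s (Pi.single j 1)) * χ (s (Pi.single j 1)) (s (Pi.single i 1))
        = χ (Pi.single i 1) (Pi.single j 1) * χ (Pi.single j 1) (Pi.single i 1) := by
    rw [hs_single, hs_single]
    exact hχ.mul_swap_sub_zsmul (hCartan_p i) (hCartan_p j)
  refine ⟨hdiag, hsymm, fun i j => ?_, fun i m hm => ?_⟩
  · rw [hdiag, hsymm]
    exact hCartan i j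
  · rw [hdiag]
    exact hqnum i m hm

/-- Let `χ` be a bicharacter on `ℤ^I` of Cartan type with generalized Cartan matrix `C`,
i.e. `χ(α_i,α_i)^{c_{ij}} = χ(α_i,α_j)χ(α_j,α_i)` for all `i,j`, and
`[m+1]_{χ(α_i,α_i)} ≠ 0` whenever `m < -c_{ij}` for some `j ≠ i`. Then for each `p ∈ I`
the reflected bicharacter `r_p(χ)(a,b) = χ(s_p a, s_p b)` satisfies
`r_p(χ)(α_i,α_i) = χ(α_i,α_i)` and
`r_p(χ)(α_i,α_j) r_p(χ)(α_j,α_i) = χ(α_i,α_j)χ(α_j,α_i)`; in particular `r_p(χ)` is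
again of Cartan type with the same Cartan matrix `C`. -/
theorem stmt_6 {k : Type*} [Field k] {I : Type*} [Fintype I] [DecidableEq I] [Nonempty I]
    (C : I → I → ℤ)
    (hdiag : ∀ i, C i i = 2)
    (hoff : ∀ j l, j ≠ l → C j l ≤ 0)
    (hzero : ∀ i j, C i j = 0 → C j i = 0)
    (χ : (I → ℤ) → (I → ℤ) → kˣ)
    (h1 : ∀ a b c : I → ℤ, χ (a + b) c = χ a c * χ b c)
    (h2 : ∀ c a b : I → ℤ, χ c (a + b) = χ c a * χ c b)
    (hCartan : ∀ i j : I,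
      χ (Pi.single i 1) (Pi.single i 1) ^ (C i j)
        = χ (Pi.single i 1) (Pi.single j 1) * χ (Pi.single j 1) (Pi.single i 1))
    (hqnum : ∀ i : I, ∀ m : ℕ, (∃ j, j ≠ i ∧ (m : ℤ) < -C i j) →
      (∑ l ∈ Finset.range (m + 1),
        ((χ (Pi.single i 1) (Pi.single i 1) : kˣ) : k) ^ l) ≠ 0)
    (p : I)
    (s : (I → ℤ) → (I → ℤ))
    (hs : ∀ x, s x = x - (∑ j, C p j * x j) • Pi.single p 1) :
    (∀ i : I, χ (s (Pi.single i 1)) (s (Pi.single i 1))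
        = χ (Pi.single i 1) (Pi.single i 1)) ∧
    (∀ i j : I,
      χ (s (Pi.single i 1)) (s (Pi.single j 1)) * χ (s (Pi.single j 1)) (s (Pi.single i 1))
        = χ (Pi.single i 1) (Pi.single j 1) * χ (Pi.single j 1) (Pi.single i 1)) ∧
    (∀ i j : I,
      χ (s (Pi.single i 1)) (s (Pi.single i 1)) ^ (C i j)
        = χ (s (Pi.single i 1)) (s (Pi.single j 1)) *
            χ (s (Pi.single j 1)) (s (Pi.single i 1))) ∧
    (∀ i : I, ∀ m : ℕ, (∃ j, j ≠ i ∧ (m : ℤ) < -C i j) →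
      (∑ l ∈ Finset.range (m + 1),
        ((χ (s (Pi.single i 1)) (s (Pi.single i 1)) : kˣ) : k) ^ l) ≠ 0) :=
  stmt_6_general C χ h1 h2 hCartan hqnum p s hs
end

section
/- Let C be a Cartan scheme with root system R of type C. Then for all a ∈ A and i, j ∈ I with i ≠ j, one has -c^a_{ij} = max{m ∈ ℕ₀ : α_j + m α_i ∈ R^a_+}. -/
/-!
The simple reflection `s_i^a` sends `α_j + t α_i` to `α_j + (-c^a_{ij} - t) α_i`.
Applied with `t = 0` at the object `r_i(a)`, it shows that `α_j - c^a_{ij} α_i` is a root of `R^a`.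
Conversely, if `α_j + m α_i ∈ R^a`, its image `α_j + (-c^a_{ij} - m) α_i` is a root of `R^{r_i(a)}`
whose `α_j`-coefficient is `1`, so by (R1) it is positive, and `m ≤ -c^a_{ij}`.
-/

namespace CartanScheme

variable {I : Type*} [DecidableEq I]

/-- `reflect (C a i) i` is the simple reflection `s_i^a`. -/
def reflect [Fintype I] (c : I → ℤ) (i : I) (x : I → ℤ) : I → ℤ :=
  x - (∑ k, c k * x k) • Pi.single i 1

theorem reflect_single_add_smul_single [Fintype I] {c : I → ℤ} {i j : I} (hc : c i = 2) (t : ℤ) :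
    reflect c i (Pi.single j 1 + t • Pi.single i 1) = Pi.single j 1 + (-c j - t) • Pi.single i 1 := by
  have hsum : ∑ k, c k * (Pi.single j 1 + t • Pi.single i 1 : I → ℤ) k = c j + 2 * t := by
    simp [mul_add, Finset.sum_add_distrib, Pi.single_apply, hc, mul_comm]
  ext k
  rw [reflect, hsum]
  simp only [Pi.sub_apply, Pi.add_apply, Pi.smul_apply, smul_eq_mul]
  ring

theorem single_add_smul_single_nonneg_iff {i j : I} (hij : i ≠ j) (t : ℤ) :
    (∀ k, 0 ≤ (Pi.single j 1 + t • Pi.single i 1 : I → ℤ) k) ↔ 0 ≤ t := by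
  refine ⟨fun h => by simpa [hij] using h i, fun ht k => ?_⟩
  simp only [Pi.add_apply, Pi.smul_apply, smul_eq_mul, Pi.single_apply]
  split_ifs <;> omega

theorem nonneg_of_single_add_smul_single_mem {R Rplus : Set (I → ℤ)}
    (hRplus : Rplus = R ∩ {x | ∀ k, 0 ≤ x k}) (hR : R = Rplus ∪ -Rplus) {i j : I} (hij : i ≠ j)
    {t : ℤ} (hx : Pi.single j 1 + t • Pi.single i 1 ∈ R) : 0 ≤ t := by
  rw [hR, hRplus] at hx
  rcases hx with hpos | hneg
  · exact (single_add_smul_single_nonneg_iff hij t).1 hpos.2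
  · have := hneg.2 j
    simp [Ne.symm hij] at this

end CartanScheme

open CartanScheme

theorem stmt_8_general {I A : Type*} [Fintype I] [DecidableEq I]
    (r : I → A → A) (C : A → I → I → ℤ)
    (hdiag : ∀ a i, C a i i = 2)
    (hoff : ∀ a j l, j ≠ l → C a j l ≤ 0)
    (hC1 : ∀ i a, r i (r i a) = a)
    (hC2 : ∀ a i j, C (r i a) i j = C a i j)
    (R : A → Set (I → ℤ))
    (Rplus : A → Set (I → ℤ))
    (hRplus : ∀ a, Rplus a = R a ∩ {x | ∀ i, 0 ≤ x i})
    (hR1 : ∀ a, R a = Rplus a ∪ (-Rplus a))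
    (hR2 : ∀ a i, R a ∩ {x | ∃ z : ℤ, x = z • Pi.single i 1}
        = {Pi.single i 1, -Pi.single i 1})
    (hR3 : ∀ a i,
      (fun x => x - (∑ j, C a i j * x j) • Pi.single i 1) '' R a = R (r i a)) :
    ∀ a : A, ∀ i j : I, i ≠ j →
      IsGreatest {m : ℕ | Pi.single j 1 + (m : ℤ) • Pi.single i 1 ∈ Rplus a}
        (-(C a i j)).toNat := by
  intro a i j hij
  have hreflect : ∀ b x, x ∈ R b → reflect (C b i) i x ∈ R (r i b) := fun b x hx =>
    hR3 b i ▸ Set.mem_image_of_mem _ hx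
  have hsimple : Pi.single j 1 ∈ R (r i a) :=
    (hR2 (r i a) j ▸ Set.mem_insert _ _ : Pi.single j 1 ∈ R (r i a) ∩ _).1
  have hneg : 0 ≤ -C a i j := neg_nonneg.2 (hoff a i j hij)
  have htoNat : ((-(C a i j)).toNat : ℤ) = -C a i j := Int.toNat_of_nonneg hneg
  refine ⟨?_, fun m hm => ?_⟩
  · have hroot := hreflect (r i a) _ hsimple
    rw [hC1, show C (r i a) i = C a i from funext (hC2 a i)] at hroot
    have hstring := reflect_single_add_smul_single (j := j) (hdiag a i) 0
    rw [zero_smul, add_zero, sub_zero] at hstring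
    rw [Set.mem_ofPred_eq, htoNat, hRplus]
    exact ⟨hstring ▸ hroot, (single_add_smul_single_nonneg_iff hij _).2 hneg⟩
  · have hroot := hreflect a _ ((hRplus a ▸ hm : _ ∈ R a ∩ _).1)
    rw [reflect_single_add_smul_single (hdiag a i)] at hroot
    have hbound := nonneg_of_single_add_smul_single_mem (hRplus _) (hR1 _) hij hroot
    omega

/-- Let `C` be a Cartan scheme (index set `I`, objects `A`, involutions `r_i`, generalized
Cartan matrices `C^a` with `c^{r_i(a)}_{ij} = c^a_{ij}`) and `R` a root system of type `C`
(axioms (R1)–(R4)). Then for all `a ∈ A` and `i ≠ j`,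
`-c^a_{ij} = max{m ∈ ℕ₀ : α_j + m α_i ∈ R^a_+}`. -/
theorem stmt_8 {I A : Type*} [Fintype I] [DecidableEq I] [Nonempty I] [Nonempty A]
    (r : I → A → A) (C : A → I → I → ℤ)
    (hdiag : ∀ a i, C a i i = 2)
    (hoff : ∀ a j l, j ≠ l → C a j l ≤ 0)
    (hzero : ∀ a i j, C a i j = 0 → C a j i = 0)
    (hC1 : ∀ i a, r i (r i a) = a)
    (hC2 : ∀ a i j, C (r i a) i j = C a i j)
    (R : A → Set (I → ℤ))
    (Rplus : A → Set (I → ℤ))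
    (hRplus : ∀ a, Rplus a = R a ∩ {x | ∀ i, 0 ≤ x i})
    (hR1 : ∀ a, R a = Rplus a ∪ (-Rplus a))
    (hR2 : ∀ a i, R a ∩ {x | ∃ z : ℤ, x = z • Pi.single i 1}
        = {Pi.single i 1, -Pi.single i 1})
    (hR3 : ∀ a i,
      (fun x => x - (∑ j, C a i j * x j) • Pi.single i 1) '' R a = R (r i a))
    (hR4 : ∀ a i j, i ≠ j →
      ∀ h : (R a ∩ {x | ∃ m₁ m₂ : ℕ,
          x = (m₁ : ℤ) • Pi.single i 1 + (m₂ : ℤ) • Pi.single j 1}).Finite,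
        (r i ∘ r j)^[h.toFinset.card] a = a) :
    ∀ a : A, ∀ i j : I, i ≠ j →
      IsGreatest {m : ℕ | Pi.single j 1 + (m : ℤ) • Pi.single i 1 ∈ Rplus a}
        (-(C a i j)).toNat :=
  stmt_8_general r C hdiag hoff hC1 hC2 R Rplus hRplus hR1 hR2 hR3
end

section
/- Let χ be a bicharacter on ℤ^I, p ∈ I, and let b = min{m ∈ ℕ : [m]_{χ(α_p,α_p)} = 0} be finite. Assume χ is p-finite. Then for all β ∈ ℤ^I, χ(α_p, β)^{b-1} χ(β, α_p)^{b-1} = ρ^{r_p(χ)}(s_p^χ(β)) / ρ^χ(β), where ρ^χ : ℤ^I → kˣ is the group homomorphism with ρ^χ(α_i) = χ(α_i, α_i) for all i ∈ I. -/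
/-!
Both sides are multiplicative in `β` (the reflection `s_p` is additive), so it suffices to compare
them at the simple roots `α_j`. Expanding `χ(α_j - c_j α_p, α_j - c_j α_p)` shows that the right
side at `α_j` is `(q_pj q_jp)^(-c_j) q_pp^(c_j² - c_j)`. Since `q_pp^b = 1`, this agrees with
`(q_pj q_jp)^(b-1)` thanks to the defining property of `m = -c_j`: either `[m+1]_{q_pp} = 0`, and
then `m + 1 = b` by the minimality of `b` and of `m`, or `q_pp^m q_pj q_jp = 1`.
-/

open Finset

section MapAdd

variable {M G : Type*} [AddCommGroup M] [CommGroup G] {f : M → G}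

def addHomOfMapAdd (hf : ∀ x y, f (x + y) = f x * f y) : M →+ Additive G :=
  AddMonoidHom.mk' (fun x => Additive.ofMul (f x)) hf

theorem map_zsmul_of_map_add (hf : ∀ x y, f (x + y) = f x * f y) (n : ℤ) (x : M) :
    f (n • x) = f x ^ n :=
  congrArg Additive.toMul (map_zsmul (addHomOfMapAdd hf) n x)

theorem map_eq_prod_zpow_single {I : Type*} [Fintype I] [DecidableEq I] {f : (I → ℤ) → G}
    (hf : ∀ x y, f (x + y) = f x * f y) (β : I → ℤ) :
    f β = ∏ j, f (Pi.single j 1) ^ β j := by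
  have hβ : ∑ j, β j • Pi.single j (1 : ℤ) = β := by
    ext i
    simp [Finset.sum_apply, Pi.single_apply]
  have h := congrArg Additive.toMul
    (map_sum (addHomOfMapAdd hf) (fun j => β j • Pi.single j 1) univ)
  rw [hβ, toMul_sum] at h
  exact h.trans (prod_congr rfl fun j _ => map_zsmul_of_map_add hf (β j) _)

theorem eq_of_map_add_of_eq_single {I : Type*} [Fintype I] [DecidableEq I]
    {f g : (I → ℤ) → G} (hf : ∀ x y, f (x + y) = f x * f y) (hg : ∀ x y, g (x + y) = g x * g y)
    (h : ∀ j, f (Pi.single j 1) = g (Pi.single j 1)) : f = g := by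
  ext β
  simp only [map_eq_prod_zpow_single hf β, map_eq_prod_zpow_single hg β, h]

theorem bichar_add_zsmul_self {χ : M → M → G} (h1 : ∀ a b c, χ (a + b) c = χ a c * χ b c)
    (h2 : ∀ c a b, χ c (a + b) = χ c a * χ c b) (A P : M) (n : ℤ) :
    χ (A + n • P) (A + n • P) = χ A A * (χ P A * χ A P) ^ n * χ P P ^ (n * n) := by
  have hl (c : M) (n : ℤ) (x : M) : χ (n • x) c = χ x c ^ n :=
    map_zsmul_of_map_add (f := (χ · c)) (fun x y => h1 x y c) n x
  have hr (c : M) (n : ℤ) (x : M) : χ c (n • x) = χ c x ^ n := map_zsmul_of_map_add (h2 c) n x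
  rw [h1, h2, h2, hl, hl, hr, hr, ← zpow_mul, mul_zpow]
  simp only [mul_assoc, mul_comm]

end MapAdd

theorem pow_eq_one_of_geom_sum_eq_zero {R : Type*} [Ring R] {x : R} {n : ℕ}
    (h : ∑ i ∈ range n, x ^ i = 0) : x ^ n = 1 :=
  sub_eq_zero.mp (by rw [← geom_sum_mul, h, zero_mul])

theorem zpow_eq_zpow_of_pow_eq_one {G : Type*} [Group G] {q : G} {b : ℕ} (hq : q ^ b = 1)
    {A B : ℤ} (h : A ≡ B [ZMOD b]) : q ^ A = q ^ B :=
  zpow_eq_zpow_iff_modEq.2 (h.of_dvd (Int.natCast_dvd_natCast.2 (orderOf_dvd_of_pow_eq_one hq)))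

theorem zpow_pred_eq_of_cartan {k : Type*} [CommRing k] [NoZeroDivisors k] {q x y : kˣ} {b m : ℕ}
    (hb1 : 1 ≤ b) (hbzero : ∑ l ∈ range b, (q : k) ^ l = 0)
    (hbmin : ∀ n, 1 ≤ n → n < b → ∑ l ∈ range n, (q : k) ^ l ≠ 0)
    (hm : (∑ l ∈ range (m + 1), (q : k) ^ l) * ((q : k) ^ m * x * y - 1) = 0)
    (hm' : ∀ n < m, (∑ l ∈ range (n + 1), (q : k) ^ l) * ((q : k) ^ n * x * y - 1) ≠ 0) :
    (x * y) ^ ((b : ℤ) - 1) = (x * y) ^ (m : ℤ) * q ^ ((m : ℤ) * (m + 1)) := by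
  have hq : q ^ b = 1 := Units.ext (by simpa using pow_eq_one_of_geom_sum_eq_zero hbzero)
  rcases mul_eq_zero.mp hm with hsum | hunit
  · have hmb : m + 1 = b := by
      refine le_antisymm (not_lt.1 fun hlt => ?_) (not_lt.1 fun hlt => hbmin _ (by omega) hlt hsum)
      exact hm' (b - 1) (by omega) (by rw [Nat.sub_add_cancel hb1, hbzero, zero_mul])
    subst hmb
    have hq' : q ^ ((m : ℤ) * (m + 1)) = 1 := by
      rw [mul_comm, zpow_mul]
      norm_cast
      rw [hq, one_pow]
    simp [hq']
  · have ht : x * y = q ^ (-(m : ℤ)) := by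
      rw [zpow_neg, zpow_natCast, eq_inv_iff_mul_eq_one, mul_comm]
      exact Units.ext (by simpa [mul_assoc] using sub_eq_zero.mp hunit)
    rw [ht, ← zpow_mul, ← zpow_mul, ← zpow_add]
    exact zpow_eq_zpow_of_pow_eq_one hq (Int.modEq_iff_add_fac.2 ⟨m, by ring⟩)

section Reflection

variable {I G : Type*} [Fintype I] [CommGroup G]

theorem prod_zpow_add (X : I → G) (x y : I → ℤ) :
    ∏ i, X i ^ (x + y) i = (∏ i, X i ^ x i) * ∏ i, X i ^ y i := by
  simp only [Pi.add_apply, zpow_add, prod_mul_distrib]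

theorem prod_zpow_zsmul (X : I → G) (n : ℤ) (x : I → ℤ) :
    ∏ i, X i ^ (n • x) i = (∏ i, X i ^ x i) ^ n := by
  simp only [Pi.smul_apply, smul_eq_mul, mul_comm n, zpow_mul, prod_zpow]

variable [DecidableEq I]

theorem prod_zpow_single (X : I → G) (j : I) : ∏ i, X i ^ (Pi.single j 1 : I → ℤ) i = X j := by
  rw [Fintype.prod_eq_single j fun i hi => by simp [hi]]
  simp

variable {c : I → ℤ} {p : I} {s : (I → ℤ) → (I → ℤ)}

theorem reflection_add (hs : ∀ x, s x = x - (∑ j, c j * x j) • Pi.single p 1) (x y : I → ℤ) :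
    s (x + y) = s x + s y := by
  simp only [hs, Pi.add_apply, mul_add, sum_add_distrib, add_smul]
  abel

theorem reflection_single (hs : ∀ x, s x = x - (∑ j, c j * x j) • Pi.single p 1) (j : I) :
    s (Pi.single j 1) = Pi.single j 1 + (-c j) • Pi.single p 1 := by
  rw [hs, neg_smul, ← sub_eq_add_neg]
  simp [Pi.single_apply]

theorem prod_reflection_div_prod_single {χ : (I → ℤ) → (I → ℤ) → G}
    (h1 : ∀ a b c, χ (a + b) c = χ a c * χ b c) (h2 : ∀ c a b, χ c (a + b) = χ c a * χ c b)
    (hcp : c p = 2) (hs : ∀ x, s x = x - (∑ j, c j * x j) • Pi.single p 1) (j : I) :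
    (∏ i, χ (s (Pi.single i 1)) (s (Pi.single i 1)) ^ s (Pi.single j 1) i) /
        ∏ i, χ (Pi.single i 1) (Pi.single i 1) ^ (Pi.single j 1 : I → ℤ) i
      = (χ (Pi.single p 1) (Pi.single j 1) * χ (Pi.single j 1) (Pi.single p 1)) ^ (-c j) *
          χ (Pi.single p 1) (Pi.single p 1) ^ (c j * c j - c j) := by
  have hX (i : I) : χ (s (Pi.single i 1)) (s (Pi.single i 1)) = χ (Pi.single i 1) (Pi.single i 1) *
      (χ (Pi.single p 1) (Pi.single i 1) * χ (Pi.single i 1) (Pi.single p 1)) ^ (-c i) *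
      χ (Pi.single p 1) (Pi.single p 1) ^ (-c i * -c i) := by
    rw [reflection_single hs]
    exact bichar_add_zsmul_self h1 h2 _ _ _
  have hXp : χ (s (Pi.single p 1)) (s (Pi.single p 1)) = χ (Pi.single p 1) (Pi.single p 1) := by
    rw [hX, hcp, mul_zpow, ← zpow_add]
    group
  rw [reflection_single hs j, prod_zpow_add, prod_zpow_zsmul, prod_zpow_single, prod_zpow_single,
    prod_zpow_single, hXp, hX, mul_assoc, mul_assoc, mul_div_cancel_left]
  simp only [neg_mul_neg, zpow_sub, zpow_neg]

end Reflection

theorem stmt_9_general {k : Type*} [Field k] {I : Type*} [Fintype I] [DecidableEq I]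
    (χ : (I → ℤ) → (I → ℤ) → kˣ)
    (h1 : ∀ a b c : I → ℤ, χ (a + b) c = χ a c * χ b c)
    (h2 : ∀ c a b : I → ℤ, χ c (a + b) = χ c a * χ c b)
    (p : I)
    (b : ℕ) (hb1 : 1 ≤ b)
    (hbzero : (∑ l ∈ Finset.range b,
        ((χ (Pi.single p 1) (Pi.single p 1) : kˣ) : k) ^ l) = 0)
    (hbmin : ∀ m : ℕ, 1 ≤ m → m < b →
      (∑ l ∈ Finset.range m,
        ((χ (Pi.single p 1) (Pi.single p 1) : kˣ) : k) ^ l) ≠ 0)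
    (c : I → ℤ)
    (hcp : c p = 2)
    (hcle : ∀ j, j ≠ p → c j ≤ 0)
    (hcmin : ∀ j, j ≠ p →
      (∑ l ∈ Finset.range ((-c j).toNat + 1),
          ((χ (Pi.single p 1) (Pi.single p 1) : kˣ) : k) ^ l) *
        (((χ (Pi.single p 1) (Pi.single p 1) : kˣ) : k) ^ (-c j).toNat *
            ((χ (Pi.single p 1) (Pi.single j 1) : kˣ) : k) *
            ((χ (Pi.single j 1) (Pi.single p 1) : kˣ) : k) - 1) = 0)
    (hcmin' : ∀ j, j ≠ p → ∀ m : ℕ, (m : ℤ) < -c j →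
      (∑ l ∈ Finset.range (m + 1),
          ((χ (Pi.single p 1) (Pi.single p 1) : kˣ) : k) ^ l) *
        (((χ (Pi.single p 1) (Pi.single p 1) : kˣ) : k) ^ m *
            ((χ (Pi.single p 1) (Pi.single j 1) : kˣ) : k) *
            ((χ (Pi.single j 1) (Pi.single p 1) : kˣ) : k) - 1) ≠ 0)
    (s : (I → ℤ) → (I → ℤ))
    (hs : ∀ x, s x = x - (∑ j, c j * x j) • Pi.single p 1) :
    ∀ β : I → ℤ,
      χ (Pi.single p 1) β ^ (b - 1) * χ β (Pi.single p 1) ^ (b - 1)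
        = (∏ i, χ (s (Pi.single i 1)) (s (Pi.single i 1)) ^ (s β i)) /
            (∏ i, χ (Pi.single i 1) (Pi.single i 1) ^ (β i)) := by
  have hq : χ (Pi.single p 1) (Pi.single p 1) ^ b = 1 :=
    Units.ext (by simpa using pow_eq_one_of_geom_sum_eq_zero hbzero)
  have key (j : I) :
      (χ (Pi.single p 1) (Pi.single j 1) * χ (Pi.single j 1) (Pi.single p 1)) ^ ((b : ℤ) - 1) =
        (χ (Pi.single p 1) (Pi.single j 1) * χ (Pi.single j 1) (Pi.single p 1)) ^ (-c j) *
          χ (Pi.single p 1) (Pi.single p 1) ^ (c j * c j - c j) := by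
    rcases eq_or_ne j p with rfl | hj
    · rw [hcp, mul_zpow, mul_zpow, ← zpow_add, ← zpow_add, ← zpow_add]
      exact zpow_eq_zpow_of_pow_eq_one hq (Int.modEq_iff_add_fac.2 ⟨-2, by ring⟩)
    · have hm : ((-c j).toNat : ℤ) = -c j := Int.toNat_of_nonneg (by linarith [hcle j hj])
      rw [zpow_pred_eq_of_cartan hb1 hbzero hbmin (hcmin j hj)
        fun n hn => hcmin' j hj n (by omega), hm]
      congr 2
      ring
  refine funext_iff.1 (eq_of_map_add_of_eq_single (fun x y => ?_) (fun x y => ?_) (fun j => ?_))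
  · rw [h1, h2, mul_pow, mul_pow, mul_mul_mul_comm]
  · rw [reflection_add hs, prod_zpow_add, prod_zpow_add, mul_div_mul_comm]
  · rw [prod_reflection_div_prod_single h1 h2 hcp hs, ← key, ← mul_pow, ← zpow_natCast,
      Nat.cast_sub hb1, Nat.cast_one]

/-- Let `χ` be a bicharacter on `ℤ^I`, `p ∈ I`, and `b = min{m ∈ ℕ : [m]_{χ(α_p,α_p)} = 0}`
finite. Assume `χ` is `p`-finite with Cartan entries `c j = c_{pj}^χ` and let
`s_p(α_j) = α_j - c_{pj} α_p` (an involution), `r_p(χ)(a,b) = χ(s_p a, s_p b)`.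
Then for all `β ∈ ℤ^I`,
`χ(α_p,β)^{b-1} χ(β,α_p)^{b-1} = ρ^{r_p(χ)}(s_p β) / ρ^χ(β)`,
where `ρ^χ` is the homomorphism `ℤ^I → kˣ` with `ρ^χ(α_i) = χ(α_i,α_i)`, i.e.
`ρ^χ(β) = ∏_i χ(α_i,α_i)^{β_i}`. -/
theorem stmt_9 {k : Type*} [Field k] {I : Type*} [Fintype I] [DecidableEq I] [Nonempty I]
    (χ : (I → ℤ) → (I → ℤ) → kˣ)
    (h1 : ∀ a b c : I → ℤ, χ (a + b) c = χ a c * χ b c)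
    (h2 : ∀ c a b : I → ℤ, χ c (a + b) = χ c a * χ c b)
    (p : I)
    (b : ℕ) (hb1 : 1 ≤ b)
    (hbzero : (∑ l ∈ Finset.range b,
        ((χ (Pi.single p 1) (Pi.single p 1) : kˣ) : k) ^ l) = 0)
    (hbmin : ∀ m : ℕ, 1 ≤ m → m < b →
      (∑ l ∈ Finset.range m,
        ((χ (Pi.single p 1) (Pi.single p 1) : kˣ) : k) ^ l) ≠ 0)
    (c : I → ℤ)
    (hcp : c p = 2)
    (hcle : ∀ j, j ≠ p → c j ≤ 0)
    (hcmin : ∀ j, j ≠ p →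
      (∑ l ∈ Finset.range ((-c j).toNat + 1),
          ((χ (Pi.single p 1) (Pi.single p 1) : kˣ) : k) ^ l) *
        (((χ (Pi.single p 1) (Pi.single p 1) : kˣ) : k) ^ (-c j).toNat *
            ((χ (Pi.single p 1) (Pi.single j 1) : kˣ) : k) *
            ((χ (Pi.single j 1) (Pi.single p 1) : kˣ) : k) - 1) = 0)
    (hcmin' : ∀ j, j ≠ p → ∀ m : ℕ, (m : ℤ) < -c j →
      (∑ l ∈ Finset.range (m + 1),
          ((χ (Pi.single p 1) (Pi.single p 1) : kˣ) : k) ^ l) *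
        (((χ (Pi.single p 1) (Pi.single p 1) : kˣ) : k) ^ m *
            ((χ (Pi.single p 1) (Pi.single j 1) : kˣ) : k) *
            ((χ (Pi.single j 1) (Pi.single p 1) : kˣ) : k) - 1) ≠ 0)
    (s : (I → ℤ) → (I → ℤ))
    (hs : ∀ x, s x = x - (∑ j, c j * x j) • Pi.single p 1) :
    ∀ β : I → ℤ,
      χ (Pi.single p 1) β ^ (b - 1) * χ β (Pi.single p 1) ^ (b - 1)
        = (∏ i, χ (s (Pi.single i 1)) (s (Pi.single i 1)) ^ (s β i)) /
            (∏ i, χ (Pi.single i 1) (Pi.single i 1) ^ (β i)) :=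
  stmt_9_general χ h1 h2 p b hb1 hbzero hbmin c hcp hcle hcmin hcmin' s hs
end

section
/- Let B be a commutative integral domain, x an indeterminate, k ∈ ℕ, and X ∈ M_k(B[x]). Then there exist s ∈ {0,1,…,k}, matrices D₁, D₂ ∈ M_k(B) with det D₁ ≠ 0 and det D₂ ≠ 0, a matrix D₀ ∈ M_k(B[x]), and b ∈ B \ {0} such that D₁ X D₂ = x·D₀ + b·diag(1,…,1,0,…,0) with s ones on the diagonal. -/
/-!
Only the constant term `X(0)` matters, since `D₁ X D₂` differs from `D₁ X(0) D₂` by `x` times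
a matrix over `B[x]`. Over the fraction field `K` of `B`, elementary operations, a rescaling and a
permutation bring `X(0)` to `diag(1,…,1,0,…,0)`; clearing the denominators of the two
transforming matrices over `K` gives `D₁ X(0) D₂ = b • diag(1,…,1,0,…,0)` over `B`.
-/

open Matrix Polynomial

theorem Fin.exists_perm_mem_iff_lt_card {k : ℕ} (t : Finset (Fin k)) :
    ∃ σ : Equiv.Perm (Fin k), ∀ j, σ j ∈ t ↔ (j : ℕ) < t.card := by
  have ht : t.card ≤ k := by simpa using t.card_le_univ
  have hin : Fintype.card {j : Fin k // (j : ℕ) < t.card} = Fintype.card t := by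
    rw [Fintype.card_subtype, Fin.card_filter_val_lt, Fintype.card_coe]; omega
  have hout : Fintype.card {j : Fin k // ¬ (j : ℕ) < t.card} = Fintype.card {j // j ∉ t} := by
    rw [Fintype.card_subtype_compl, Fintype.card_subtype_compl, hin]
  set e := Fintype.equivOfCardEq hin
  set e' := Fintype.equivOfCardEq hout
  refine ⟨Equiv.subtypeCongr e e', fun j => ?_⟩
  by_cases hj : (j : ℕ) < t.card
  · simp [Equiv.subtypeCongr, hj]
  · simpa [Equiv.subtypeCongr, hj] using (e' ⟨j, hj⟩).prop

theorem Matrix.det_permMatrix_ne_zero {n R : Type*} [Fintype n] [DecidableEq n] [CommRing R]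
    [Nontrivial R] (σ : Equiv.Perm n) : (σ.permMatrix R).det ≠ 0 := by
  rw [det_permutation]
  exact ((Equiv.Perm.sign σ).isUnit.map (Int.castRingHom R)).ne_zero

theorem Matrix.exists_det_ne_zero_mul_mul_eq_diagonal_mem {K n : Type*} [Field K] [Fintype n]
    [DecidableEq n] (M : Matrix n n K) :
    ∃ (t : Finset n) (P Q : Matrix n n K), P.det ≠ 0 ∧ Q.det ≠ 0 ∧
      P * M * Q = diagonal (fun i => if i ∈ t then 1 else 0) := by
  classical
  obtain ⟨L, L', d, hd⟩ := Pivot.exists_list_transvec_mul_mul_list_transvec_eq_diagonal M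
  refine ⟨Finset.univ.filter fun i => d i ≠ 0, (L.map TransvectionStruct.toMatrix).prod,
    (L'.map TransvectionStruct.toMatrix).prod *
      -- `1` rather than `0⁻¹ = 0` on the zero entries keeps the determinant nonzero
      diagonal fun i => if d i = 0 then 1 else (d i)⁻¹,
    by simp [TransvectionStruct.det_toMatrix_prod], ?_, ?_⟩
  · simp only [det_mul, TransvectionStruct.det_toMatrix_prod, det_diagonal, one_mul]
    exact Finset.prod_ne_zero_iff.2 fun i _ => by split_ifs <;> simp_all
  · rw [← Matrix.mul_assoc, hd, diagonal_mul_diagonal]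
    congr 1; funext i
    by_cases h : d i = 0 <;> simp [h]

theorem Matrix.exists_det_ne_zero_mul_mul_eq_diagonal_lt {K : Type*} [Field K] {k : ℕ}
    (M : Matrix (Fin k) (Fin k) K) :
    ∃ s ≤ k, ∃ P Q : Matrix (Fin k) (Fin k) K, P.det ≠ 0 ∧ Q.det ≠ 0 ∧
      P * M * Q = diagonal (fun i : Fin k => if (i : ℕ) < s then 1 else 0) := by
  obtain ⟨t, P, Q, hP, hQ, hPMQ⟩ := M.exists_det_ne_zero_mul_mul_eq_diagonal_mem
  obtain ⟨σ, hσ⟩ := Fin.exists_perm_mem_iff_lt_card t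
  refine ⟨t.card, by simpa using t.card_le_univ, σ.permMatrix K * P, Q * σ⁻¹.permMatrix K,
    by rw [det_mul]; exact mul_ne_zero (det_permMatrix_ne_zero σ) hP,
    by rw [det_mul]; exact mul_ne_zero hQ (det_permMatrix_ne_zero σ⁻¹), ?_⟩
  calc σ.permMatrix K * P * M * (Q * σ⁻¹.permMatrix K)
      = σ.permMatrix K * (P * M * Q) * σ⁻¹.permMatrix K := by simp only [Matrix.mul_assoc]
    _ = _ := by
      rw [hPMQ, PEquiv.toMatrix_toPEquiv_mul, PEquiv.mul_toMatrix_toPEquiv, Equiv.Perm.inv_def,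
        Equiv.symm_symm, submatrix_submatrix, Function.id_comp, Function.comp_id,
        submatrix_diagonal_equiv]
      simp only [Function.comp_def, hσ]

theorem IsLocalization.exists_matrix_map_eq_smul {R S : Type*} [CommRing R] [CommRing S]
    [Algebra R S] (M : Submonoid R) [IsLocalization M S] {m n : Type*} [Finite m] [Finite n]
    (P : Matrix m n S) :
    ∃ (b : M) (D : Matrix m n R), D.map (algebraMap R S) = algebraMap R S b • P := by
  obtain ⟨b, hb⟩ := exist_integer_multiples_of_finite M fun ij : m × n => P ij.1 ij.2
  choose D hD using hb
  refine ⟨b, of fun i j => D (i, j), ext fun i j => ?_⟩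
  simpa [Algebra.smul_def] using hD (i, j)

theorem IsFractionRing.exists_det_ne_zero_mul_mul_eq_smul {B K n : Type*} [CommRing B]
    [Field K] [Algebra B K] [IsFractionRing B K] [Fintype n] [DecidableEq n] {M N : Matrix n n B}
    {P Q : Matrix n n K} (hP : P.det ≠ 0) (hQ : Q.det ≠ 0)
    (h : P * M.map (algebraMap B K) * Q = N.map (algebraMap B K)) :
    ∃ (D₁ D₂ : Matrix n n B) (b : B),
      D₁.det ≠ 0 ∧ D₂.det ≠ 0 ∧ b ≠ 0 ∧ D₁ * M * D₂ = b • N := by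
  set f := algebraMap B K
  have hf_ne : ∀ b : nonZeroDivisors B, f b ≠ 0 :=
    fun b => (IsLocalization.map_units K b).ne_zero
  have hdet : ∀ (b : nonZeroDivisors B) (D : Matrix n n B) (R : Matrix n n K), R.det ≠ 0 →
      D.map f = f b • R → D.det ≠ 0 := by
    intro b D R hR hD hzero
    have := f.map_det D
    rw [hzero, map_zero, RingHom.mapMatrix_apply, hD, det_smul] at this
    exact mul_ne_zero (pow_ne_zero _ (hf_ne b)) hR this.symm
  obtain ⟨b₁, D₁, hD₁⟩ := IsLocalization.exists_matrix_map_eq_smul (nonZeroDivisors B) P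
  obtain ⟨b₂, D₂, hD₂⟩ := IsLocalization.exists_matrix_map_eq_smul (nonZeroDivisors B) Q
  refine ⟨D₁, D₂, b₁ * b₂, hdet b₁ D₁ P hP hD₁, hdet b₂ D₂ Q hQ hD₂,
    fun hb => hf_ne (b₁ * b₂) (by simpa using congrArg f hb), ?_⟩
  apply map_injective (IsFractionRing.injective B K)
  dsimp only
  rw [Matrix.map_mul, Matrix.map_mul, hD₁, hD₂, map_smul' _ _ _ (map_mul f), ← h, map_mul,
    Matrix.smul_mul, smul_mul_smul_comm]

theorem Matrix.X_smul_map_divX_add {R m n : Type*} [CommRing R] (Y : Matrix m n R[X]) :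
    (X : R[X]) • Y.map divX + (Y.map constantCoeff).map C = Y :=
  ext fun i j => X_mul_divX_add (Y i j)

theorem Matrix.map_constantCoeff_map_C_mul_mul {R n : Type*} [CommRing R] [Fintype n]
    (A B : Matrix n n R) (Y : Matrix n n R[X]) :
    (A.map C * Y * B.map C).map constantCoeff = A * Y.map constantCoeff * B := by
  simp [Matrix.map_mul, Matrix.map_map, Function.comp_def]

/-- Let `B` be an integral domain, `x` an indeterminate, `k ∈ ℕ`, `X ∈ M_k(B[x])`.
Then there exist `s ≤ k`, `D₁, D₂ ∈ M_k(B)` with nonzero determinants,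
`D₀ ∈ M_k(B[x])` and `b ∈ B \ {0}` with
`D₁ X D₂ = x·D₀ + b·diag(1,…,1,0,…,0)` (`s` ones). -/
theorem stmt_10 {B : Type*} [CommRing B] [IsDomain B] (k : ℕ)
    (X : Matrix (Fin k) (Fin k) (Polynomial B)) :
    ∃ (s : ℕ) (_ : s ≤ k) (D₁ D₂ : Matrix (Fin k) (Fin k) B)
      (D₀ : Matrix (Fin k) (Fin k) (Polynomial B)) (b : B),
      D₁.det ≠ 0 ∧ D₂.det ≠ 0 ∧ b ≠ 0 ∧
      (D₁.map (Polynomial.C)) * X * (D₂.map (Polynomial.C))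
        = (Polynomial.X : Polynomial B) • D₀ +
            Polynomial.C b •
              Matrix.diagonal (fun i : Fin k => if (i : ℕ) < s then (1 : Polynomial B) else 0) := by
  obtain ⟨s, hs, P, Q, hP, hQ, hPQ⟩ := exists_det_ne_zero_mul_mul_eq_diagonal_lt
    ((X.map constantCoeff).map (algebraMap B (FractionRing B)))
  set E : Matrix (Fin k) (Fin k) B := diagonal fun i => if (i : ℕ) < s then 1 else 0
  obtain ⟨D₁, D₂, b, h₁, h₂, hb, hD⟩ :=
    IsFractionRing.exists_det_ne_zero_mul_mul_eq_smul (N := E) hP hQ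
      (by rw [hPQ, diagonal_map (map_zero _)]; simp)
  refine ⟨s, hs, D₁, D₂, (D₁.map C * X * D₂.map C).map divX, b, h₁, h₂, hb, ?_⟩
  conv_lhs =>
    rw [← (D₁.map C * X * D₂.map C).X_smul_map_divX_add, map_constantCoeff_map_C_mul_mul, hD]
  congr 1
  ext i j : 1
  simp [E, diagonal, apply_ite C]
end

section
/- Let 𝕂 be an algebraically closed field, B a finitely generated integral domain over 𝕂, x an indeterminate, k ∈ ℕ, r ∈ {0,…,k}, and X ∈ M_k(B[x]). Suppose that for all points p in a nonempty Zariski open subset of the affine variety of B, the matrix X(0) evaluated at p has rank at most r. Then det X = x^{k-r}·b for some b ∈ B[x]. -/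
/-!
Over a field `K`, write `M = N + C (M(0))` where every entry of `N` is divisible by `X`. Expanding
`det M` multilinearly in the rows, each term either takes at least `k - r` rows from `N`, and is then
divisible by `X ^ (k - r)`, or takes more than `r` rows from `C (M(0))`, which are then linearly
dependent. Specialising `B` at its `𝕂`-points `φ` with `φ f ≠ 0`, every coefficient of `det X` of
degree below `k - r` vanishes on a nonempty open subset of the variety of `B`, hence is zero by the
Nullstellensatz, since `B` is a domain.
-/

open Polynomial Matrix

section Nullstellensatz

variable {k A : Type*} [Field k] [IsAlgClosed k] [CommRing A] [Algebra k A] [Algebra.FiniteType k A]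

theorem eq_zero_of_forall_algHom_apply_eq_zero [IsReduced A] {a : A}
    (h : ∀ φ : A →ₐ[k] k, φ a = 0) : a = 0 := by
  have hA : IsJacobsonRing A := isJacobsonRing_of_finiteType (A := k)
  rw [← Ideal.mem_bot, ← hA.out Ideal.isRadical_bot, Ideal.jacobson, Ideal.mem_sInf]
  rintro m ⟨-, hm⟩
  let : Field (A ⧸ m) := Ideal.Quotient.field m
  have : Algebra.IsAlgebraic k (A ⧸ m) :=
    have := finite_of_finite_type_of_isJacobsonRing k (A ⧸ m)
    inferInstance
  let ψ : (A ⧸ m) →ₐ[k] k := IsAlgClosed.lift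
  rw [← Ideal.Quotient.eq_zero_iff_mem]
  exact ψ.toRingHom.injective (by simpa using h (ψ.comp (Ideal.Quotient.mkₐ k m)))

theorem eq_zero_of_forall_algHom_apply_eq_zero_of_apply_ne_zero [IsDomain A] {a f : A}
    (hf : f ≠ 0) (h : ∀ φ : A →ₐ[k] k, φ f ≠ 0 → φ a = 0) : a = 0 := by
  have haf : a * f = 0 := eq_zero_of_forall_algHom_apply_eq_zero (k := k) fun φ => by
    by_cases hφ : φ f = 0 <;> simp [hφ, h φ]
  exact (mul_eq_zero.1 haf).resolve_right hf

end Nullstellensatz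

section Det

variable {n : Type*} [Fintype n] [DecidableEq n]

theorem Matrix.pow_card_dvd_det_of_forall_dvd {R : Type*} [CommRing R] {a : R}
    (M : Matrix n n R) (s : Finset n) (h : ∀ i ∈ s, ∀ j, a ∣ M i j) : a ^ s.card ∣ M.det := by
  choose D hD using h
  let v : n → R := fun i => if i ∈ s then a else 1
  let D' : Matrix n n R := of fun i j => if hi : i ∈ s then D i hi j else M i j
  have hM : M = of fun i j => v i * D' i j := by
    ext i j
    by_cases hi : i ∈ s <;> simp [v, D', hi, hD]
  rw [hM, det_mul_column]
  have hv : ∏ i, v i = a ^ s.card := by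
    simp only [v, Finset.prod_ite_mem, Finset.univ_inter, Finset.prod_const]
  exact hv ▸ dvd_mul_right _ _

theorem Matrix.det_eq_zero_of_rows_eq_map_of_rank_lt {K S : Type*} [Field K] [CommRing S]
    [IsDomain S] (f : K →+* S) (M : Matrix n n S) (A : Matrix n n K) (t : Finset n)
    (hrows : ∀ i ∈ t, ∀ j, M i j = f (A i j)) (hrank : A.rank < t.card) : M.det = 0 := by
  have hA : ¬ LinearIndependent K (A.submatrix ((↑) : t → n) id).row := fun hli => by
    have := (A.rank_submatrix_le ((↑) : t → n) id).trans_lt hrank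
    rw [hli.rank_matrix, Fintype.card_coe] at this
    exact this.false
  obtain ⟨c, hc, i, hi⟩ := Fintype.not_linearIndependent_iff.1 hA
  refine det_eq_zero_of_not_linearIndependent_rows fun hM => ?_
  refine Fintype.not_linearIndependent_iff.2 ⟨fun i : t => f (c i), ?_, i, by simpa using hi⟩
    (hM.comp _ Subtype.val_injective)
  ext j
  simpa [Finset.sum_apply, hrows _ (Subtype.prop _)] using congr_arg (f ∘ (· j)) hc

theorem Polynomial.X_pow_dvd_det_of_rank_coeff_zero_le {K : Type*} [Field K]
    (M : Matrix n n K[X]) {r : ℕ} (h : (M.map (coeff · 0)).rank ≤ r) :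
    X ^ (Fintype.card n - r) ∣ M.det := by
  set A := M.map (coeff · 0)
  let N : n → n → K[X] := fun i j => M i j - C (A i j)
  let A' : n → n → K[X] := fun i j => C (A i j)
  have hsplit : M.det = ∑ s : Finset n, det (of (s.piecewise N A')) := by
    have hM : N + A' = M := by ext i j; simp [N, A']
    rw [← hM]
    exact detRowAlternating.map_add_univ N A'
  rw [hsplit]
  refine Finset.dvd_sum fun s _ => ?_
  by_cases hs : Fintype.card n - r ≤ s.card
  · refine (pow_dvd_pow X hs).trans (pow_card_dvd_det_of_forall_dvd _ s fun i hi j => ?_)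
    simp [Finset.piecewise_eq_of_mem _ _ _ hi, X_dvd_iff, N, A]
  · rw [det_eq_zero_of_rows_eq_map_of_rank_lt C _ A sᶜ ?_ ?_]
    · exact dvd_zero _
    · intro i hi j
      simp [Finset.piecewise_eq_of_notMem _ _ _ (Finset.mem_compl.1 hi), A']
    · rw [Finset.card_compl]
      omega

end Det

theorem stmt_11_general {𝕂 : Type*} [Field 𝕂] [IsAlgClosed 𝕂]
    {B : Type*} [CommRing B] [IsDomain B] [Algebra 𝕂 B] [Algebra.FiniteType 𝕂 B]
    (k r : ℕ)
    (X : Matrix (Fin k) (Fin k) (Polynomial B))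
    (f : B) (hf : f ≠ 0)
    (hrank : ∀ φ : B →ₐ[𝕂] 𝕂, φ f ≠ 0 →
      (X.map (fun pol => φ (pol.coeff 0))).rank ≤ r) :
    ∃ b : Polynomial B, X.det = Polynomial.X ^ (k - r) * b := by
  refine X_pow_dvd_iff.2 fun d hd =>
    eq_zero_of_forall_algHom_apply_eq_zero_of_apply_ne_zero (k := 𝕂) hf fun φ hφ => ?_
  have hφX := X_pow_dvd_det_of_rank_coeff_zero_le (X.map (Polynomial.map (φ : B →+* 𝕂)))
    (by simpa [Function.comp_def] using hrank φ hφ)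
  have hdet : (X.map (Polynomial.map (φ : B →+* 𝕂))).det = X.det.map φ :=
    (RingHom.map_det (mapRingHom (φ : B →+* 𝕂)) X).symm
  rw [Fintype.card_fin, hdet, X_pow_dvd_iff] at hφX
  simpa using hφX d hd

/-- Let `𝕂` be algebraically closed, `B` a finitely generated integral domain over `𝕂`,
`k ∈ ℕ`, `r ≤ k`, `X ∈ M_k(B[x])`. If for all points `p` of a nonempty Zariski open subset
of the affine variety of `B` (i.e. all `𝕂`-points not vanishing on a fixed `f ≠ 0`)
the matrix `X(0)` evaluated at `p` has rank at most `r`, then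
`det X = x^{k-r}·b` for some `b ∈ B[x]`. -/
theorem stmt_11 {𝕂 : Type*} [Field 𝕂] [IsAlgClosed 𝕂]
    {B : Type*} [CommRing B] [IsDomain B] [Algebra 𝕂 B] [Algebra.FiniteType 𝕂 B]
    (k r : ℕ) (hr : r ≤ k)
    (X : Matrix (Fin k) (Fin k) (Polynomial B))
    (f : B) (hf : f ≠ 0)
    (hrank : ∀ φ : B →ₐ[𝕂] 𝕂, φ f ≠ 0 →
      (X.map (fun pol => φ (pol.coeff 0))).rank ≤ r) :
    ∃ b : Polynomial B, X.det = Polynomial.X ^ (k - r) * b :=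
  stmt_11_general k r X f hf hrank
end
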